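/- Let w be a right-infinite word over the binary alphabet {0,1}. Then w is Sturmian (i.e., p_w(n) = n+1 for all n ≥ 1) if and only if w is balanced and not ultimately periodic. -/

import Mathlib

/-!
Write `p(n)` for the complexity. Every factor of length `n` extends to the right, so
`p(n + 1) = p(n) + #{right special factors of length n}`.

A balanced word has at most one right special factor of each length: two of them end in `0s`
and `1s` for a common `s`, making `0s0` and `1s1` factors. An aperiodic word has at least one,
since otherwise the next letter is a function of the previous `n` letters. Hence balanced
aperiodic words have `p(n) = n + 1`.

Conversely, ultimately periodic words have bounded complexity, and `p(n) = n + 1` gives exactly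
one right special factor of each length. If the word were unbalanced, a shortest unbalanced pair
of factors would be `1t1` and `0t0` with `t` a palindrome. Then `t` is the right special factor
of its length and, for some letter `c`, `ctc̄` is not a factor. Away from `t` the word evolves
deterministically, so consecutive occurrences of `t` are at most `|t| + 1` apart, and because `t`
is a palindrome the letter before an occurrence is the letter after the previous one. So once `t`
is followed by `c`, every later occurrence of `t` is followed by `c`, the next letter is a
function of the previous `|t|` letters, and the word is ultimately periodic.
-/

/-- A finite word `u` is a subword (factor) of the right-infinite word `w` if
it occurs as a contiguous block of consecutive letters of `w`. -/
def IsFactor {A : Type*} (w : ℕ → A) (u : List A) : Prop :=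
  ∃ i : ℕ, u = (List.range u.length).map fun j => w (i + j)

/-- The subword complexity of a right-infinite word `w`: the number of
distinct subwords of `w` of length `n`. -/
noncomputable def icomplexity {A : Type*} (w : ℕ → A) (n : ℕ) : ℕ :=
  Set.ncard {u : List A | u.length = n ∧ IsFactor w u}

/-- The height of a finite binary word: the number of occurrences of the
letter `1` (here `true`). -/
def height (u : List Bool) : ℕ := u.count true

/-- A right-infinite binary word is balanced if any two of its subwords of
equal length have heights differing by at most `1`. -/
def BalancedWord (w : ℕ → Bool) : Prop :=
  ∀ u v : List Bool, IsFactor w u → IsFactor w v → u.length = v.length →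
    |(height u : ℤ) - (height v : ℤ)| ≤ 1

/-- A right-infinite word is ultimately periodic if from some point on it is
periodic with some period `p ≥ 1`. -/
def UltimatelyPeriodic {A : Type*} (w : ℕ → A) : Prop :=
  ∃ p, 1 ≤ p ∧ ∃ M, ∀ i, M ≤ i → w (i + p) = w i

section Factors

variable {A : Type*} (w : ℕ → A)

def factorAt (i n : ℕ) : List A := (List.range n).map fun j => w (i + j)

variable {w}

@[simp] lemma length_factorAt (i n : ℕ) : (factorAt w i n).length = n := by
  simp [factorAt]

lemma isFactor_iff_exists_factorAt {u : List A} :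
    IsFactor w u ↔ ∃ i, u = factorAt w i u.length :=
  Iff.rfl

lemma isFactor_factorAt (i n : ℕ) : IsFactor w (factorAt w i n) := ⟨i, by simp [factorAt]⟩

lemma factorAt_add (i a b : ℕ) :
    factorAt w i (a + b) = factorAt w i a ++ factorAt w (i + a) b := by
  simp [factorAt, List.range_add, Nat.add_assoc]

lemma factorAt_succ (i n : ℕ) : factorAt w i (n + 1) = factorAt w i n ++ [w (i + n)] := by
  rw [factorAt_add]
  simp [factorAt]

lemma factorAt_succ' (i n : ℕ) : factorAt w i (n + 1) = w i :: factorAt w (i + 1) n := by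
  rw [Nat.add_comm n, factorAt_add]
  simp [factorAt]

lemma factorAt_eq_factorAt_iff {i j n : ℕ} :
    factorAt w i n = factorAt w j n ↔ ∀ x < n, w (i + x) = w (j + x) := by
  simp [factorAt, List.map_inj_left]

lemma IsFactor.of_isInfix {u v : List A} (h : u <:+: v) (hv : IsFactor w v) : IsFactor w u := by
  obtain ⟨s, t, rfl⟩ := h
  obtain ⟨i, hi⟩ := hv
  change s ++ u ++ t = factorAt w i _ at hi
  refine ⟨i + s.length, ?_⟩
  rw [List.length_append, List.length_append, factorAt_add, factorAt_add] at hi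
  exact (List.append_inj (List.append_inj hi (by simp)).1 (by simp)).2

lemma IsFactor.of_isPrefix {u v : List A} (h : u <+: v)
    (hv : IsFactor w v) : IsFactor w u :=
  hv.of_isInfix h.isInfix

lemma IsFactor.of_isSuffix {u v : List A} (h : u <:+ v)
    (hv : IsFactor w v) : IsFactor w u :=
  hv.of_isInfix h.isInfix

lemma setOf_isFactor_eq_range (n : ℕ) :
    {u : List A | u.length = n ∧ IsFactor w u} = Set.range (factorAt w · n) := by
  ext u
  constructor
  · rintro ⟨rfl, i, hi⟩
    exact ⟨i, hi.symm⟩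
  · rintro ⟨i, rfl⟩
    exact ⟨length_factorAt i n, isFactor_factorAt i n⟩

lemma getElem?_eq_of_factorAt_eq {u : List A} {i x : ℕ}
    (h : factorAt w i u.length = u) (hx : x < u.length) : u[x]? = some (w (i + x)) := by
  conv_lhs => rw [← h]
  simp [factorAt, hx]

lemma icomplexity_eq_ncard_range (n : ℕ) :
    icomplexity w n = (Set.range (factorAt w · n)).ncard :=
  congrArg Set.ncard (setOf_isFactor_eq_range n)

lemma icomplexity_zero : icomplexity w 0 = 1 := by
  simp [icomplexity_eq_ncard_range, factorAt]

lemma finite_range_factorAt [Finite A] (n : ℕ) : (Set.range (factorAt w · n)).Finite :=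
  (List.finite_length_eq A n).subset (by rintro _ ⟨i, rfl⟩; simp)

lemma exists_repeated_factorAt [Finite A] (a n : ℕ) :
    ∃ p p', a ≤ p ∧ p < p' ∧ p' ≤ a + icomplexity w n ∧
      factorAt w p n = factorAt w p' n := by
  by_contra! h
  have hinj : Set.InjOn (factorAt w · n) (Set.Icc a (a + icomplexity w n)) := by
    intro p hp p' hp' heq
    by_contra hne
    rcases Nat.lt_or_gt_of_ne hne with hlt | hlt
    · exact h p p' hp.1 hlt hp'.2 heq
    · exact h p' p hp'.1 hlt hp.2 heq.symm
  have := Set.ncard_le_ncard_of_injOn _ (fun p _ => Set.mem_range_self p) hinj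
    (finite_range_factorAt n)
  rw [Set.ncard_Icc_nat, ← icomplexity_eq_ncard_range] at this
  omega

lemma factorAt_succ_eq_of_eq {i j n : ℕ} (h : factorAt w i n = factorAt w j n)
    (hnext : w (i + n) = w (j + n)) : factorAt w (i + 1) n = factorAt w (j + 1) n := by
  have := factorAt_succ (w := w) i n
  rw [h, hnext, ← factorAt_succ, factorAt_succ', factorAt_succ'] at this
  exact (List.cons_eq_cons.mp this).2

lemma factorAt_add_eq_of_next_letter_eq {i j n d : ℕ} (h₀ : factorAt w i n = factorAt w j n)
    (h : ∀ e < d, factorAt w (i + e) n = factorAt w (j + e) n → w (i + e + n) = w (j + e + n)) :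
    factorAt w (i + d) n = factorAt w (j + d) n := by
  induction d with
  | zero => exact h₀
  | succ d ih =>
    have hd := ih fun e he => h e (by omega)
    exact factorAt_succ_eq_of_eq hd (h d (by omega) hd)

lemma ultimatelyPeriodic_of_next_letter_eq [Finite A] (a n : ℕ)
    (h : ∀ i j, a ≤ i → a ≤ j → factorAt w i n = factorAt w j n →
      w (i + n) = w (j + n)) :
    UltimatelyPeriodic w := by
  obtain ⟨p, p', hap, hpp', -, heq⟩ := exists_repeated_factorAt (w := w) a n
  have hnext : ∀ d, w (p + d + n) = w (p' + d + n) := fun d =>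
    h _ _ (by omega) (by omega) (factorAt_add_eq_of_next_letter_eq heq fun e _ =>
      h _ _ (by omega) (by omega))
  refine ⟨p' - p, by omega, p + n, fun k hk => ?_⟩
  convert (hnext (k - p - n)).symm using 2 <;> omega

lemma exists_icomplexity_le_of_ultimatelyPeriodic (h : UltimatelyPeriodic w) :
    ∃ C, ∀ n, icomplexity w n ≤ C := by
  obtain ⟨p, hp, M, hper⟩ := h
  have hperiodic : Function.Periodic (fun k => w (M + k)) p := fun k => by
    simpa [Nat.add_assoc] using hper (M + k) (by omega)
  have hrange : ∀ n, Set.range (factorAt w · n) ⊆ (factorAt w · n) '' Set.Iio (M + p) := by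
    rintro n _ ⟨k, rfl⟩
    rcases Nat.lt_or_ge k M with hk | hk
    · exact ⟨k, by simp; omega, rfl⟩
    refine ⟨M + (k - M) % p, by simp [Nat.mod_lt _ hp],
      factorAt_eq_factorAt_iff.2 fun x _ => ?_⟩
    have h₁ := hperiodic.map_mod_nat ((k - M) % p + x)
    have h₂ := hperiodic.map_mod_nat (k - M + x)
    simp only [Nat.mod_add_mod] at h₁
    convert h₁.symm.trans h₂ using 2 <;> omega
  refine ⟨M + p, fun n => ?_⟩
  calc icomplexity w n ≤ ((factorAt w · n) '' Set.Iio (M + p)).ncard := by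
        rw [icomplexity_eq_ncard_range]
        exact Set.ncard_le_ncard (hrange n) ((Set.finite_Iio _).image _)
    _ ≤ (Set.Iio (M + p)).ncard := Set.ncard_image_le (Set.finite_Iio _)
    _ = M + p := Set.ncard_Iio_nat _

end Factors

section RightSpecial

variable {w : ℕ → Bool}

def RightSpecial (w : ℕ → Bool) (u : List Bool) : Prop :=
  IsFactor w (u ++ [false]) ∧ IsFactor w (u ++ [true])

lemma rightSpecial_of_next_letter_ne {i j n : ℕ} (h : factorAt w i n = factorAt w j n)
    (hne : w (i + n) ≠ w (j + n)) : RightSpecial w (factorAt w i n) := by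
  have hi : IsFactor w (factorAt w i n ++ [w (i + n)]) :=
    factorAt_succ (w := w) i n ▸ isFactor_factorAt i (n + 1)
  have hj : IsFactor w (factorAt w i n ++ [w (j + n)]) :=
    h ▸ factorAt_succ (w := w) j n ▸ isFactor_factorAt j (n + 1)
  cases hx : w (i + n) <;> cases hy : w (j + n) <;> simp_all [RightSpecial]

lemma ultimatelyPeriodic_of_forall_not_rightSpecial {n : ℕ}
    (h : ∀ u : List Bool, u.length = n → ¬ RightSpecial w u) : UltimatelyPeriodic w :=
  ultimatelyPeriodic_of_next_letter_eq 0 n fun _ _ _ _ heq => by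
    by_contra hne
    exact h _ (length_factorAt _ _) (rightSpecial_of_next_letter_ne heq hne)

lemma finite_setOf_rightSpecial (n : ℕ) : {u | u.length = n ∧ RightSpecial w u}.Finite :=
  (List.finite_length_eq Bool n).subset fun _ hu => hu.1

lemma icomplexity_succ (w : ℕ → Bool) (n : ℕ) :
    icomplexity w (n + 1) = icomplexity w n + {u | u.length = n ∧ RightSpecial w u}.ncard := by
  set E : Bool → Set (List Bool) := fun c => {u | u.length = n ∧ IsFactor w (u ++ [c])}
  have hfin : ∀ c, (E c).Finite := fun c => (List.finite_length_eq Bool n).subset fun _ hu => hu.1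
  have hsucc : {u | u.length = n + 1 ∧ IsFactor w u} =
      (· ++ [false]) '' E false ∪ (· ++ [true]) '' E true := by
    ext u
    constructor
    · rintro ⟨hu, hf⟩
      obtain rfl | ⟨v, c, rfl⟩ := u.eq_nil_or_concat'
      · simp at hu
      cases c <;> simp_all [E]
    · rintro (⟨v, ⟨hv, hf⟩, rfl⟩ | ⟨v, ⟨hv, hf⟩, rfl⟩) <;> simp [hv, hf]
  have hdisj : Disjoint ((· ++ [false]) '' E false) ((· ++ [true]) '' E true) := by
    rw [Set.disjoint_left]
    rintro _ ⟨u, -, rfl⟩ ⟨v, -, h⟩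
    simpa using congrArg List.getLast? h
  have hunion : {u | u.length = n ∧ IsFactor w u} = E false ∪ E true := by
    rw [setOf_isFactor_eq_range]
    ext u
    constructor
    · rintro ⟨i, rfl⟩
      have := factorAt_succ (w := w) i n ▸ isFactor_factorAt i (n + 1)
      cases hc : w (i + n) <;> simp_all [E]
    · rw [← setOf_isFactor_eq_range]
      rintro (⟨hu, hf⟩ | ⟨hu, hf⟩) <;>
        exact ⟨hu, hf.of_isPrefix (List.prefix_append _ _)⟩
  have hinter : {u | u.length = n ∧ RightSpecial w u} = E false ∩ E true := by
    ext u
    simp only [RightSpecial, E, Set.mem_ofPred_eq, Set.mem_inter_iff]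
    tauto
  calc icomplexity w (n + 1)
        = ((· ++ [false]) '' E false).ncard + ((· ++ [true]) '' E true).ncard := by
        rw [icomplexity, hsucc, Set.ncard_union_eq hdisj ((hfin _).image _) ((hfin _).image _)]
    _ = (E false).ncard + (E true).ncard := by
        rw [Set.ncard_image_of_injective _ (List.append_left_injective _),
          Set.ncard_image_of_injective _ (List.append_left_injective _)]
    _ = icomplexity w n + {u | u.length = n ∧ RightSpecial w u}.ncard := by
        rw [icomplexity, hunion, hinter, Set.ncard_union_add_ncard_inter _ _ (hfin _) (hfin _)]

lemma eq_of_rightSpecial_of_icomplexity_eq {u v : List Bool}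
    (h : ∀ n, icomplexity w n = n + 1) (hu : RightSpecial w u) (hv : RightSpecial w v)
    (huv : u.length = v.length) : u = v := by
  have hone : {x | x.length = u.length ∧ RightSpecial w x}.ncard ≤ 1 := by
    have := icomplexity_succ w u.length
    rw [h, h] at this
    omega
  exact (Set.ncard_le_one (finite_setOf_rightSpecial _)).1 hone u ⟨rfl, hu⟩ v ⟨huv.symm, hv⟩

end RightSpecial

lemma exists_common_prefix_of_ne {α : Type*} :
    ∀ {u v : List α}, u.length = v.length → u ≠ v →
      ∃ s x y u' v', x ≠ y ∧ u = s ++ x :: u' ∧ v = s ++ y :: v'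
  | [], [], _, hne => absurd rfl hne
  | a :: u, b :: v, hlen, hne => by
    by_cases hab : a = b
    · subst hab
      obtain ⟨s, x, y, u', v', hxy, rfl, rfl⟩ :=
        exists_common_prefix_of_ne (by simpa using hlen) fun h => hne (by rw [h])
      exact ⟨a :: s, x, y, u', v', hxy, rfl, rfl⟩
    · exact ⟨[], a, b, u, v, hab, rfl, rfl⟩

lemma exists_common_suffix_of_ne {α : Type*} {u v : List α} (hlen : u.length = v.length)
    (hne : u ≠ v) : ∃ s x y u' v', x ≠ y ∧ u = u' ++ x :: s ∧ v = v' ++ y :: s := by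
  obtain ⟨s, x, y, u', v', hxy, hu, hv⟩ :=
    exists_common_prefix_of_ne (u := u.reverse) (v := v.reverse) (by simpa using hlen)
      (by simpa using hne)
  refine ⟨s.reverse, x, y, u'.reverse, v'.reverse, hxy, ?_, ?_⟩
  · simpa using congrArg List.reverse hu
  · simpa using congrArg List.reverse hv

section Balance

variable {w : ℕ → Bool}

@[simp] lemma height_nil : height [] = 0 := rfl

@[simp] lemma height_cons (a : Bool) (l : List Bool) : height (a :: l) = a.toNat + height l := by
  cases a <;> simp [height, Nat.add_comm]

@[simp] lemma height_append (l₁ l₂ : List Bool) :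
    height (l₁ ++ l₂) = height l₁ + height l₂ :=
  List.count_append ..

@[simp] lemma height_reverse (l : List Bool) : height l.reverse = height l :=
  List.count_reverse ..

def HasUnbalancedPair (w : ℕ → Bool) (n : ℕ) : Prop :=
  ∃ u v : List Bool, IsFactor w u ∧ IsFactor w v ∧ u.length = n ∧ v.length = n ∧
    height v + 2 ≤ height u

lemma not_balancedWord_iff : ¬ BalancedWord w ↔ ∃ n, HasUnbalancedPair w n := by
  simp only [BalancedWord, not_forall, not_le, exists_prop]
  constructor
  · rintro ⟨u, v, hu, hv, hlen, hh⟩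
    rcases lt_abs.1 hh with hh | hh
    · exact ⟨_, u, v, hu, hv, rfl, hlen.symm, by omega⟩
    · exact ⟨_, v, u, hv, hu, hlen.symm, rfl, by omega⟩
  · rintro ⟨n, u, v, hu, hv, hul, hvl, hh⟩
    exact ⟨u, v, hu, hv, hul.trans hvl.symm, lt_abs.2 (Or.inl (by omega))⟩

lemma hasUnbalancedPair_of_sandwich {a b : List Bool} (h₁ : IsFactor w (true :: a ++ [true]))
    (h₀ : IsFactor w (false :: b ++ [false])) (hlen : a.length = b.length)
    (hh : height a = height b) : HasUnbalancedPair w (a.length + 2) :=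
  ⟨_, _, h₁, h₀, by simp, by simp [hlen], by
    simp only [List.cons_append, height_cons, height_append, height_nil, Bool.toNat_true,
      Bool.toNat_false, hh]
    omega⟩

lemma eq_of_rightSpecial_of_balancedWord (hb : BalancedWord w) {u v : List Bool}
    (hu : RightSpecial w u) (hv : RightSpecial w v) (hlen : u.length = v.length) : u = v := by
  by_contra hne
  obtain ⟨s, x, y, u', v', hxy, rfl, rfl⟩ := exists_common_suffix_of_ne hlen hne
  refine not_balancedWord_iff.2 ⟨_, hasUnbalancedPair_of_sandwich (a := s) ?_ ?_ rfl rfl⟩ hb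
  · cases x <;> cases y <;> simp only [ne_eq, not_true_eq_false] at hxy
    · exact hv.2.of_isSuffix ⟨v', by simp⟩
    · exact hu.2.of_isSuffix ⟨u', by simp⟩
  · cases x <;> cases y <;> simp only [ne_eq, not_true_eq_false] at hxy
    · exact hu.1.of_isSuffix ⟨u', by simp⟩
    · exact hv.1.of_isSuffix ⟨v', by simp⟩

lemma icomplexity_eq_of_balancedWord (hb : BalancedWord w) (hw : ¬ UltimatelyPeriodic w)
    (n : ℕ) : icomplexity w n = n + 1 := by
  induction n with
  | zero => exact icomplexity_zero
  | succ n ih =>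
    have hpos : 0 < {u | u.length = n ∧ RightSpecial w u}.ncard := by
      refine (Set.ncard_pos (finite_setOf_rightSpecial n)).2 ?_
      by_contra hS
      exact hw (ultimatelyPeriodic_of_forall_not_rightSpecial fun u hu hrs => hS ⟨u, hu, hrs⟩)
    have hle : {u | u.length = n ∧ RightSpecial w u}.ncard ≤ 1 :=
      (Set.ncard_le_one (finite_setOf_rightSpecial n)).2 fun u hu v hv =>
        eq_of_rightSpecial_of_balancedWord hb hu.2 hv.2 (hu.1.trans hv.1.symm)
    rw [icomplexity_succ, ih]
    omega

lemma exists_sandwich_of_hasUnbalancedPair {n : ℕ} (hn : HasUnbalancedPair w n)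
    (hmin : ∀ k < n, ¬ HasUnbalancedPair w k) :
    ∃ s : List Bool, s.length + 2 ≤ n ∧
      IsFactor w (true :: s ++ [true]) ∧ IsFactor w (false :: s ++ [false]) := by
  obtain ⟨_ | ⟨a, u⟩, _ | ⟨b, v⟩, hu, hv, rfl, hlen, hh⟩ := hn
  · simp at hh
  · simp at hlen
  · simp at hlen
  simp only [List.length_cons, Nat.add_right_cancel_iff, height_cons] at hlen hh
  have htail : ¬ height v + 2 ≤ height u := fun h =>
    hmin u.length (by simp) ⟨u, v, hu.of_isSuffix (List.suffix_cons _ _),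
      hv.of_isSuffix (List.suffix_cons _ _), rfl, hlen, h⟩
  obtain ⟨rfl, rfl⟩ : a = true ∧ b = false := by
    cases a <;> cases b <;> simp only [Bool.toNat_true, Bool.toNat_false] at hh <;>
      first | omega | exact ⟨rfl, rfl⟩
  have hne : u ≠ v := by
    rintro rfl
    simp only [Bool.toNat_true, Bool.toNat_false] at hh
    omega
  obtain ⟨s, x, y, u', v', hxy, rfl, rfl⟩ := exists_common_prefix_of_ne hlen.symm hne
  -- if the first difference were `0` against `1`, the rests would be a shorter unbalanced pair
  obtain ⟨rfl, rfl⟩ : x = true ∧ y = false := by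
    cases x <;> cases y <;> simp only [ne_eq, not_true_eq_false] at hxy
    · refine absurd ⟨u', v', ?_, ?_, rfl, ?_, ?_⟩ (hmin u'.length (by simp; omega))
      · exact hu.of_isSuffix ⟨true :: s ++ [false], by simp⟩
      · exact hv.of_isSuffix ⟨false :: s ++ [true], by simp⟩
      · simpa using hlen
      · simp only [height_append, height_cons, Bool.toNat_true, Bool.toNat_false] at hh
        omega
    · exact ⟨rfl, rfl⟩
  exact ⟨s, by simp, hu.of_isPrefix ⟨u', by simp⟩, hv.of_isPrefix ⟨v', by simp⟩⟩

lemma reverse_eq_of_sandwich {s : List Bool} (h₁ : IsFactor w (true :: s ++ [true]))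
    (h₀ : IsFactor w (false :: s ++ [false]))
    (hmin : ∀ k < s.length + 2, ¬ HasUnbalancedPair w k) : s.reverse = s := by
  by_contra hne
  obtain ⟨p, x, y, s₁, r₁, hxy, hs, hr⟩ :=
    exists_common_prefix_of_ne (u := s) (v := s.reverse) (by simp) (Ne.symm hne)
  have hs' : s = r₁.reverse ++ y :: p.reverse := by
    rw [← List.reverse_reverse s, hr]
    simp
  have hp : p.length + 2 < s.length + 2 := by
    rw [hs]
    simp
  cases x <;> cases y <;> simp only [ne_eq, not_true_eq_false] at hxy
  · refine hmin _ (by simpa using hp)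
      (hasUnbalancedPair_of_sandwich (a := p.reverse) (b := p) ?_ ?_ (by simp) (by simp))
    · exact h₁.of_isSuffix ⟨true :: r₁.reverse, by rw [hs']; simp⟩
    · exact h₀.of_isPrefix ⟨s₁ ++ [false], by rw [hs]; simp⟩
  · refine hmin _ hp
      (hasUnbalancedPair_of_sandwich (a := p) (b := p.reverse) ?_ ?_ (by simp) (by simp))
    · exact h₁.of_isPrefix ⟨s₁ ++ [true], by rw [hs]; simp⟩
    · exact h₀.of_isSuffix ⟨false :: r₁.reverse, by rw [hs']; simp⟩

lemma exists_palindrome_sandwich (hw : ¬ BalancedWord w) :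
    ∃ t : List Bool, t.reverse = t ∧
      IsFactor w (true :: t ++ [true]) ∧ IsFactor w (false :: t ++ [false]) := by
  classical
  have hex := not_balancedWord_iff.1 hw
  obtain ⟨s, hs, h₁, h₀⟩ := exists_sandwich_of_hasUnbalancedPair (Nat.find_spec hex)
    fun k hk => Nat.find_min hex hk
  refine ⟨s, reverse_eq_of_sandwich h₁ h₀ fun _ hk => ?_, h₁, h₀⟩
  exact Nat.find_min hex (by omega)

end Balance

section Occurrences

variable {w : ℕ → Bool} {t : List Bool}

lemma next_letter_eq_of_factorAt_ne
    (huniq : ∀ u : List Bool, u.length = t.length → RightSpecial w u → u = t) {i j : ℕ}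
    (h : factorAt w i t.length = factorAt w j t.length) (hne : factorAt w i t.length ≠ t) :
    w (i + t.length) = w (j + t.length) := by
  by_contra hnext
  exact hne (huniq _ (length_factorAt _ _) (rightSpecial_of_next_letter_ne h hnext))

lemma le_add_of_consecutive_occurrences
    (huniq : ∀ u : List Bool, u.length = t.length → RightSpecial w u → u = t)
    (hcomp : icomplexity w t.length ≤ t.length + 1) {i j : ℕ} (hj : factorAt w j t.length = t)
    (hbetween : ∀ k, i < k → k < j → factorAt w k t.length ≠ t) :
    j ≤ i + t.length + 1 := by
  by_contra! hgap
  -- between `i` and `j` the windows evolve deterministically, so a repeated window would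
  -- reach `t` again before `j`
  obtain ⟨p, p', hip, hpp', hp'j, heq⟩ := exists_repeated_factorAt (w := w) (i + 1) t.length
  have hreach := factorAt_add_eq_of_next_letter_eq (d := j - p') heq fun e _ hwin =>
    next_letter_eq_of_factorAt_ne huniq hwin (hbetween _ (by omega) (by omega))
  rw [show p' + (j - p') = j by omega, hj] at hreach
  exact hbetween _ (by omega) (by omega) hreach

lemma letter_eq_of_overlapping_occurrences (hpal : t.reverse = t) {i j : ℕ}
    (hi : factorAt w i t.length = t) (hj : factorAt w (j + 1) t.length = t) (hij : i ≤ j)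
    (hji : j < i + t.length) : w j = w (i + t.length) := by
  have h₁ := getElem?_eq_of_factorAt_eq hi (x := j - i) (by omega)
  have h₂ := getElem?_eq_of_factorAt_eq hj (x := t.length - 1 - (j - i)) (by omega)
  have hsym : t[j - i]? = t[t.length - 1 - (j - i)]? := by
    conv_lhs => rw [← hpal]
    exact List.getElem?_reverse (by omega)
  rw [h₁, h₂, Option.some_inj] at hsym
  convert hsym using 2 <;> omega

lemma letter_before_eq_letter_after
    (huniq : ∀ u : List Bool, u.length = t.length → RightSpecial w u → u = t)
    (hcomp : icomplexity w t.length ≤ t.length + 1) (hpal : t.reverse = t) {i j : ℕ}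
    (hi : factorAt w i t.length = t) (hj : factorAt w (j + 1) t.length = t) (hij : i ≤ j)
    (hbetween : ∀ k, i < k → k ≤ j → factorAt w k t.length ≠ t) :
    w j = w (i + t.length) := by
  have hgap := le_add_of_consecutive_occurrences huniq hcomp hj fun k hik hkj =>
    hbetween k hik (by omega)
  rcases (show j < i + t.length ∨ j = i + t.length by omega) with hlt | rfl
  · exact letter_eq_of_overlapping_occurrences hpal hi hj hij hlt
  · rfl

lemma next_letter_eq_of_occurrence
    (huniq : ∀ u : List Bool, u.length = t.length → RightSpecial w u → u = t)
    (hcomp : icomplexity w t.length ≤ t.length + 1) (hpal : t.reverse = t) {c : Bool}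
    (hnc : ¬ IsFactor w (c :: t ++ [!c])) {i₀ : ℕ} (hi₀ : factorAt w i₀ t.length = t)
    (hc : w (i₀ + t.length) = c) :
    ∀ k, i₀ ≤ k → factorAt w k t.length = t → w (k + t.length) = c := by
  classical
  intro k
  induction k using Nat.strong_induction_on with
  | _ k ih =>
    intro hk hocc
    rcases hk.eq_or_lt with rfl | hlt
    · exact hc
    obtain ⟨j, rfl⟩ : ∃ j, k = j + 1 := ⟨k - 1, by omega⟩
    let P x := i₀ ≤ x ∧ factorAt w x t.length = t
    have hlast : P (Nat.findGreatest P j) := Nat.findGreatest_spec (by omega) ⟨le_rfl, hi₀⟩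
    have hprev : w j = c := by
      rw [letter_before_eq_letter_after huniq hcomp hpal hlast.2 hocc (Nat.findGreatest_le j)
        fun x hx hxj hx' => Nat.findGreatest_is_greatest hx hxj ⟨hlast.1.trans hx.le, hx'⟩]
      exact ih _ (Nat.lt_succ_of_le (Nat.findGreatest_le j)) hlast.1 hlast.2
    by_contra hne
    refine hnc (isFactor_iff_exists_factorAt.2 ⟨j, ?_⟩)
    rw [List.length_append, List.length_cons, List.length_singleton, factorAt_succ,
      factorAt_succ', hocc, hprev]
    simpa [Nat.add_assoc, Nat.add_comm 1, Bool.eq_not_iff, eq_comm] using hne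

lemma ultimatelyPeriodic_of_palindrome
    (huniq : ∀ u : List Bool, u.length = t.length → RightSpecial w u → u = t)
    (hcomp : icomplexity w t.length ≤ t.length + 1) (hpal : t.reverse = t) {c : Bool}
    (hc : IsFactor w (t ++ [c])) (hnc : ¬ IsFactor w (c :: t ++ [!c])) :
    UltimatelyPeriodic w := by
  obtain ⟨i₀, hi₀⟩ := isFactor_iff_exists_factorAt.1 hc
  rw [List.length_append, List.length_singleton, factorAt_succ] at hi₀
  obtain ⟨hocc, hnext⟩ := List.append_inj hi₀ (by simp)
  have hnext_eq := next_letter_eq_of_occurrence huniq hcomp hpal hnc hocc.symm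
    (by simpa using hnext.symm)
  refine ultimatelyPeriodic_of_next_letter_eq i₀ t.length fun i j hi hj heq => ?_
  by_cases ht : factorAt w i t.length = t
  · rw [hnext_eq i hi ht, hnext_eq j hj (heq ▸ ht)]
  · exact next_letter_eq_of_factorAt_ne huniq heq ht

end Occurrences

section Sturmian

variable {w : ℕ → Bool}

lemma not_ultimatelyPeriodic_of_icomplexity_eq (h : ∀ n, icomplexity w n = n + 1) :
    ¬ UltimatelyPeriodic w := fun hw => by
  obtain ⟨C, hC⟩ := exists_icomplexity_le_of_ultimatelyPeriodic hw
  have := hC C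
  rw [h] at this
  omega

lemma balancedWord_of_icomplexity_eq (h : ∀ n, icomplexity w n = n + 1) : BalancedWord w := by
  by_contra hb
  obtain ⟨t, hpal, h₁, h₀⟩ := exists_palindrome_sandwich hb
  have hrs : RightSpecial w t :=
    ⟨h₀.of_isSuffix ⟨[false], rfl⟩, h₁.of_isSuffix ⟨[true], rfl⟩⟩
  have huniq : ∀ u : List Bool, u.length = t.length → RightSpecial w u → u = t :=
    fun u hu hrsu => eq_of_rightSpecial_of_icomplexity_eq h hrsu hrs hu
  have hcomp : icomplexity w t.length ≤ t.length + 1 := (h _).le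
  apply not_ultimatelyPeriodic_of_icomplexity_eq h
  by_cases h₀₁ : IsFactor w (false :: t ++ [true])
  · by_cases h₁₀ : IsFactor w (true :: t ++ [false])
    · have := eq_of_rightSpecial_of_icomplexity_eq h (u := false :: t) (v := true :: t)
        ⟨h₀, h₀₁⟩ ⟨h₁₀, h₁⟩ rfl
      simp at this
    · exact ultimatelyPeriodic_of_palindrome huniq hcomp hpal (c := true) hrs.2 h₁₀
  · exact ultimatelyPeriodic_of_palindrome huniq hcomp hpal (c := false) hrs.1 h₀₁

end Sturmian

/-- A right-infinite binary word is Sturmian (`p_w(n) = n + 1` for all `n ≥ 1`)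
if and only if it is balanced and not ultimately periodic. -/
theorem sturmian_iff_balanced_aperiodic (w : ℕ → Bool) :
    (∀ n, 1 ≤ n → icomplexity w n = n + 1) ↔
      (BalancedWord w ∧ ¬ UltimatelyPeriodic w) := by
  constructor
  · intro h
    have h' : ∀ n, icomplexity w n = n + 1 := fun n => by
      rcases n.eq_zero_or_pos with rfl | hn
      exacts [icomplexity_zero, h n hn]
    exact ⟨balancedWord_of_icomplexity_eq h', not_ultimatelyPeriodic_of_icomplexity_eq h'⟩
  · rintro ⟨hb, hw⟩ n -
    exact icomplexity_eq_of_balancedWord hb hw n
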